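/- arXiv:2411.05332 — 2 statements merged into one kernel-verified Lean document; each statement's English description precedes it below -/
import Mathlib

section
/- Let n, d ≥ 1, let X be an n×d real matrix, let ρ ≥ 0, and let v ∈ ℝ^d. Then the infimum over all n×d real matrices E with ‖E‖_{1→2} ≤ ρ of (1/n)·‖X.mulVec v + E.mulVec v‖₂² equals (1/n)·(max(‖X.mulVec v‖₂ − ρ·‖v‖₁, 0))², and this infimum is attained. -/
/-!
The vectors `E v` with `‖E‖_{1→2} ≤ ρ` form exactly the closed Euclidean ball of radius
`ρ ‖v‖₁`: the triangle inequality over the columns gives one inclusion, and the rank-one matrix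
`w sign(v)ᵀ / ‖v‖₁` maps `v` to any prescribed `w` of that norm. So the problem is to minimise
`‖Xv + w‖` over that ball, and the minimum `max (‖Xv‖ - ρ ‖v‖₁) 0` is attained by moving `Xv`
radially towards the origin.
-/

open Finset Matrix WithLp

lemma max_norm_sub_le_norm_add {V : Type*} [SeminormedAddCommGroup V] (u : V) {w : V} {R : ℝ}
    (hw : ‖w‖ ≤ R) : max (‖u‖ - R) 0 ≤ ‖u + w‖ :=
  max_le (by linarith [norm_sub_le_norm_add u w]) (norm_nonneg _)

lemma exists_norm_le_and_norm_add_eq {V : Type*} [NormedAddCommGroup V] [NormedSpace ℝ V]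
    (u : V) {R : ℝ} (hR : 0 ≤ R) :
    ∃ w : V, ‖w‖ ≤ R ∧ ‖u + w‖ = max (‖u‖ - R) 0 := by
  rcases eq_or_ne u 0 with rfl | hu
  · exact ⟨0, by simpa using hR, by simpa using hR⟩
  have hu' : 0 < ‖u‖ := norm_pos_iff.mpr hu
  set t := min R ‖u‖ with ht
  have ht0 : 0 ≤ t := le_min hR hu'.le
  have htu : t ≤ ‖u‖ := min_le_right _ _
  refine ⟨-(t / ‖u‖) • u, ?_, ?_⟩
  · rw [norm_smul, norm_neg, Real.norm_of_nonneg (by positivity), div_mul_cancel₀ _ hu'.ne']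
    exact min_le_left _ _
  · have hshrink : u + -(t / ‖u‖) • u = (1 - t / ‖u‖) • u := by
      rw [sub_smul, one_smul, neg_smul, sub_eq_add_neg]
    have hcoef : 0 ≤ 1 - t / ‖u‖ := sub_nonneg.mpr ((div_le_one hu').mpr htu)
    rw [hshrink, norm_smul, Real.norm_of_nonneg hcoef, sub_mul, one_mul,
      div_mul_cancel₀ _ hu'.ne', ht]
    rcases le_total R ‖u‖ with h | h
    · rw [min_eq_left h, max_eq_left (sub_nonneg.mpr h)]
    · rw [min_eq_right h, max_eq_right (by linarith), sub_self]

section Matrix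

variable {m k : Type*} [Fintype m] [Fintype k]

lemma norm_toLp_mulVec_le {E : Matrix m k ℝ} {ρ : ℝ} (hE : ∀ j, ‖toLp 2 (Eᵀ j)‖ ≤ ρ)
    (v : k → ℝ) : ‖toLp 2 (E *ᵥ v)‖ ≤ ρ * ∑ j, |v j| := by
  have hsum : toLp 2 (E *ᵥ v) = ∑ j, v j • toLp 2 (Eᵀ j) := by
    ext i
    simp [mulVec, dotProduct, mul_comm]
  calc ‖toLp 2 (E *ᵥ v)‖ ≤ ∑ j, ‖v j • toLp 2 (Eᵀ j)‖ := hsum ▸ norm_sum_le _ _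
    _ = ∑ j, |v j| * ‖toLp 2 (Eᵀ j)‖ := by simp only [norm_smul, Real.norm_eq_abs]
    _ ≤ ∑ j, |v j| * ρ := by gcongr with j; exact hE j
    _ = ρ * ∑ j, |v j| := by rw [← sum_mul, mul_comm]

lemma exists_mulVec_eq_of_norm_le {ρ : ℝ} (hρ : 0 ≤ ρ) (v : k → ℝ) {w : EuclideanSpace ℝ m}
    (hw : ‖w‖ ≤ ρ * ∑ j, |v j|) :
    ∃ E : Matrix m k ℝ, (∀ j, ‖toLp 2 (Eᵀ j)‖ ≤ ρ) ∧ toLp 2 (E *ᵥ v) = w := by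
  set L := ∑ j, |v j|
  have hL0 : 0 ≤ L := sum_nonneg fun j _ => abs_nonneg (v j)
  rcases hL0.eq_or_lt with hL | hL
  · refine ⟨0, fun j => (norm_zero (E := EuclideanSpace ℝ m)).trans_le hρ, ?_⟩
    rw [← hL, mul_zero, norm_le_zero_iff] at hw
    simp [hw]
  set s : k → ℝ := fun j => SignType.sign (v j)
  refine ⟨L⁻¹ • vecMulVec w.ofLp s, fun j => ?_, ?_⟩
  · have hcol : toLp 2 ((L⁻¹ • vecMulVec w.ofLp s)ᵀ j) = (L⁻¹ * s j) • w := by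
      ext i
      simp only [transpose_apply, Matrix.smul_apply, vecMulVec_apply, smul_eq_mul,
        PiLp.smul_apply]
      ring
    have hs : |s j| ≤ 1 := by
      rcases lt_trichotomy (v j) 0 with h | h | h <;> simp [s, h]
    rw [hcol, norm_smul, Real.norm_eq_abs, abs_mul, abs_inv, abs_of_pos hL]
    calc L⁻¹ * |s j| * ‖w‖ ≤ L⁻¹ * 1 * (ρ * L) := by gcongr
      _ = ρ := by field_simp
  · ext i
    have hvs : ∑ j, v j * s j = L := sum_congr rfl fun j _ => self_mul_sign (v j)
    simp only [mulVec, dotProduct, Matrix.smul_apply, vecMulVec_apply, smul_eq_mul]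
    calc ∑ j, L⁻¹ * (w i * s j) * v j = L⁻¹ * w i * ∑ j, v j * s j := by
          rw [mul_sum]; exact sum_congr rfl fun j _ => by ring
      _ = w i := by rw [hvs]; field_simp

end Matrix

theorem stmt4_general (n d : ℕ)
    (X : Matrix (Fin n) (Fin d) ℝ) (ρ : ℝ) (hρ : 0 ≤ ρ) (v : Fin d → ℝ) :
    IsLeast {r : ℝ | ∃ E : Matrix (Fin n) (Fin d) ℝ,
        (⨆ j : Fin d, Real.sqrt (∑ i, E i j ^ 2)) ≤ ρ ∧
        r = (1 / n) * ∑ i, ((X.mulVec v + E.mulVec v) i) ^ 2}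
      ((1 / n) * max (Real.sqrt (∑ i, (X.mulVec v i) ^ 2) - ρ * ∑ j, |v j|) 0 ^ 2) := by
  have hnorm (x : Fin n → ℝ) : √(∑ i, x i ^ 2) = ‖toLp 2 x‖ := by
    simp [EuclideanSpace.norm_eq]
  have hsq (x : Fin n → ℝ) : ∑ i, x i ^ 2 = ‖toLp 2 x‖ ^ 2 := by
    simp [EuclideanSpace.real_norm_sq_eq]
  have hcol (E : Matrix (Fin n) (Fin d) ℝ) :
      (⨆ j, √(∑ i, E i j ^ 2)) ≤ ρ ↔ ∀ j, ‖toLp 2 (Eᵀ j)‖ ≤ ρ := by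
    simp only [hnorm]
    exact ⟨fun h j => (le_ciSup (Set.finite_range _).bddAbove j).trans h,
      fun h => Real.iSup_le h hρ⟩
  constructor
  · obtain ⟨w, hw, hmin⟩ :=
      exists_norm_le_and_norm_add_eq (toLp 2 (X *ᵥ v)) (R := ρ * ∑ j, |v j|) (by positivity)
    obtain ⟨E, hE, hEv⟩ := exists_mulVec_eq_of_norm_le hρ v hw
    refine ⟨E, (hcol E).2 hE, ?_⟩
    rw [hnorm, hsq, toLp_add, hEv, hmin]
  · rintro _ ⟨E, hE, rfl⟩
    rw [hnorm, hsq, toLp_add]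
    gcongr
    exact max_norm_sub_le_norm_add _ (norm_toLp_mulVec_le ((hcol E).1 hE) v)

theorem stmt4 (n d : ℕ) (hn : 1 ≤ n) (hd : 1 ≤ d)
    (X : Matrix (Fin n) (Fin d) ℝ) (ρ : ℝ) (hρ : 0 ≤ ρ) (v : Fin d → ℝ) :
    IsLeast {r : ℝ | ∃ E : Matrix (Fin n) (Fin d) ℝ,
        (⨆ j : Fin d, Real.sqrt (∑ i, E i j ^ 2)) ≤ ρ ∧
        r = (1 / n) * ∑ i, ((X.mulVec v + E.mulVec v) i) ^ 2}
      ((1 / n) * max (Real.sqrt (∑ i, (X.mulVec v i) ^ 2) - ρ * ∑ j, |v j|) 0 ^ 2) :=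
  stmt4_general n d X ρ hρ v
end

section
/- Let n, d ≥ 1, k ≥ 1, ρ > 0, and let N be a positive integer. Let X be an n×d real matrix, let Σ̂ := (1/n) XᵀX, and suppose (v_1, …, v_d) is an orthonormal basis of ℝ^d with Σ̂ = Σ_{j=1}^d λ_j v_j v_jᵀ and λ_1 ≥ ⋯ ≥ λ_d ≥ 0. Assume there exists v ∈ ℝ^d with ‖v‖₂ = 1, ‖v‖₀ ≤ k and ‖X.mulVec v‖₂ ≥ ρ·‖v‖₁. Define opt := sup { (1/n)·(‖X.mulVec v‖₂ − ρ·‖v‖₁)² : ‖v‖₂ = 1, ‖v‖₀ ≤ k, ‖X.mulVec v‖₂ ≥ ρ·‖v‖₁ }, and define ub as the supremum of t²/n over all tuples (v, t, y, η) such that ‖v‖₂ ≤ 1, ‖v‖₀ ≤ k, t ≥ 0, y ≥ ‖v‖₁, for each j ∈ {1,…,d} the vector η_j of nonnegative reals indexed by ℓ ∈ {−N,…,N} is SOS-II with Σ_ℓ η_j(ℓ) = 1 and ⟨v_j, v⟩ = Σ_ℓ (ℓ/N)·η_j(ℓ), and n·Σ_{j=1}^d λ_j·(Σ_ℓ (ℓ/N)²·η_j(ℓ))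 ≥ (t + ρ·y)². Then opt ≤ ub ≤ opt + (1/(4N²))·Σ_{j=1}^d λ_j. -/
/-!
For a unit vector `w` the spectral decomposition gives `‖Xw‖² = n ∑ⱼ λⱼ ⟨vⱼ, w⟩²`, and each
coordinate `cⱼ = ⟨vⱼ, w⟩ ∈ [-1, 1]` is the mean of the SOS-II weight carried by the two grid
points `ℓ / N` around it. By Jensen its second moment is at least `cⱼ²`, so `w` with
`t = ‖Xw‖ - ρ‖w‖₁`, `y = ‖w‖₁` is feasible for the relaxation, and `opt ≤ ub`.

Conversely, a probability weight on two points at distance `1 / N` has variance at most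
`1 / (4N²)`, so a feasible point of the relaxation has
`(t + ρ‖w‖₁)² ≤ ‖Xw‖² + n / (4N²) ∑ⱼ λⱼ`, whence `t² ≤ max (‖Xw‖ - ρ‖w‖₁) 0 ² + n / (4N²) ∑ⱼ λⱼ`.
Rescaling `w` to a unit vector only increases `(‖Xw‖ - ρ‖w‖₁)²`, which bounds the first term by
`n · opt`.
-/

open Matrix

/-- A vector `η` of `2N+1` nonnegative reals indexed by `ℓ ∈ {-N, …, N}` is SOS-II if
at most two of its entries are nonzero, and if two are nonzero they are consecutive. -/
def IsSOSII (N : ℕ) (η : ℤ → ℝ) : Prop :=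
  (∀ ℓ ∈ Finset.Icc (-(N : ℤ)) (N : ℤ), 0 ≤ η ℓ) ∧
  ∃ ℓ₀ : ℤ, ∀ ℓ ∈ Finset.Icc (-(N : ℤ)) (N : ℤ), η ℓ ≠ 0 → ℓ = ℓ₀ ∨ ℓ = ℓ₀ + 1

open Finset

section WeightedSums

variable {ι : Type*} (s : Finset ι) {η : ι → ℝ} (x : ι → ℝ)

lemma sq_sum_mul_le_sum_sq_mul (hη : ∀ i ∈ s, 0 ≤ η i) (hsum : ∑ i ∈ s, η i = 1) :
    (∑ i ∈ s, x i * η i) ^ 2 ≤ ∑ i ∈ s, x i ^ 2 * η i := by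
  have := sum_sq_le_sum_mul_sum_of_sq_le_mul s (r := fun i => x i * η i)
    (fun i hi => mul_nonneg (sq_nonneg (x i)) (hη i hi)) hη
    (fun i _ => le_of_eq (by ring))
  rwa [hsum, mul_one] at this

lemma sum_sq_mul_le_one (hη : ∀ i ∈ s, 0 ≤ η i) (hsum : ∑ i ∈ s, η i = 1)
    (hx : ∀ i ∈ s, |x i| ≤ 1) : ∑ i ∈ s, x i ^ 2 * η i ≤ 1 := by
  rw [← hsum]
  refine sum_le_sum fun i hi => ?_
  exact mul_le_of_le_one_left (hη i hi) ((sq_le_one_iff_abs_le_one _).mpr (hx i hi))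

lemma sum_sq_mul_le_of_two_point_support {a h : ℝ}
    (hsupp : ∀ i ∈ s, η i ≠ 0 → x i = a ∨ x i = a + h) (hsum : ∑ i ∈ s, η i = 1) :
    ∑ i ∈ s, x i ^ 2 * η i ≤ (∑ i ∈ s, x i * η i) ^ 2 + h ^ 2 / 4 := by
  have hvanish : ∑ i ∈ s, (x i - a) * (x i - a - h) * η i = 0 := by
    refine sum_eq_zero fun i hi => ?_
    by_cases hi0 : η i = 0
    · rw [hi0, mul_zero]
    · rcases hsupp i hi hi0 with hx | hx <;> rw [hx] <;> ring
  have hexpand : ∑ i ∈ s, (x i - a) * (x i - a - h) * η i =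
      ∑ i ∈ s, x i ^ 2 * η i - (2 * a + h) * ∑ i ∈ s, x i * η i + a * (a + h) * ∑ i ∈ s, η i := by
    simp only [mul_sum, ← sum_sub_distrib, ← sum_add_distrib]
    exact sum_congr rfl fun i _ => by ring
  rw [hexpand, hsum] at hvanish
  nlinarith [sq_nonneg (∑ i ∈ s, x i * η i - a - h / 2)]

end WeightedSums

noncomputable abbrev grid (N : ℕ) : Finset ℤ := Finset.Icc (-(N : ℤ)) (N : ℤ)

noncomputable def gridMean (N : ℕ) (η : ℤ → ℝ) : ℝ := ∑ ℓ ∈ grid N, ((ℓ : ℝ) / N) * η ℓ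

noncomputable def gridSecondMoment (N : ℕ) (η : ℤ → ℝ) : ℝ :=
  ∑ ℓ ∈ grid N, ((ℓ : ℝ) / N) ^ 2 * η ℓ

namespace IsSOSII

variable {N : ℕ} {η : ℤ → ℝ}

lemma sq_gridMean_le (h : IsSOSII N η) (hsum : ∑ ℓ ∈ grid N, η ℓ = 1) :
    gridMean N η ^ 2 ≤ gridSecondMoment N η :=
  sq_sum_mul_le_sum_sq_mul _ _ h.1 hsum

lemma gridSecondMoment_le_one (h : IsSOSII N η) (hsum : ∑ ℓ ∈ grid N, η ℓ = 1) :
    gridSecondMoment N η ≤ 1 := by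
  refine sum_sq_mul_le_one _ _ h.1 hsum fun ℓ hℓ => ?_
  rw [abs_div, Nat.abs_cast]
  refine div_le_one_of_le₀ ?_ N.cast_nonneg
  exact_mod_cast abs_le.mpr (mem_Icc.mp hℓ)

lemma gridSecondMoment_le (h : IsSOSII N η) (hsum : ∑ ℓ ∈ grid N, η ℓ = 1) :
    gridSecondMoment N η ≤ gridMean N η ^ 2 + 1 / (4 * N ^ 2) := by
  obtain ⟨ℓ₀, hsupp⟩ := h.2
  have := sum_sq_mul_le_of_two_point_support (grid N) (fun ℓ : ℤ => (ℓ : ℝ) / N)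
    (a := ℓ₀ / N) (h := 1 / N) (fun ℓ hℓ hne => by
      rcases hsupp ℓ hℓ hne with rfl | rfl
      · exact .inl rfl
      · exact .inr (by push_cast; ring)) hsum
  calc gridSecondMoment N η ≤ gridMean N η ^ 2 + (1 / N) ^ 2 / 4 := this
    _ = gridMean N η ^ 2 + 1 / (4 * N ^ 2) := by ring

end IsSOSII

noncomputable def twoPointWeight (ℓ₀ : ℤ) (θ : ℝ) (ℓ : ℤ) : ℝ :=
  if ℓ = ℓ₀ then 1 - θ else if ℓ = ℓ₀ + 1 then θ else 0

lemma sum_mul_twoPointWeight {s : Finset ℤ} {ℓ₀ : ℤ} (h₀ : ℓ₀ ∈ s) (h₁ : ℓ₀ + 1 ∈ s)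
    (θ : ℝ) (g : ℤ → ℝ) :
    ∑ ℓ ∈ s, g ℓ * twoPointWeight ℓ₀ θ ℓ = g ℓ₀ * (1 - θ) + g (ℓ₀ + 1) * θ := by
  rw [sum_eq_add_of_mem ℓ₀ (ℓ₀ + 1) h₀ h₁ (by omega) fun ℓ _ hℓ => by
    simp [twoPointWeight, hℓ.1, hℓ.2]]
  simp [twoPointWeight]

lemma isSOSII_twoPointWeight (N : ℕ) (ℓ₀ : ℤ) {θ : ℝ} (hθ₀ : 0 ≤ θ) (hθ₁ : θ ≤ 1) :
    IsSOSII N (twoPointWeight ℓ₀ θ) := by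
  refine ⟨fun ℓ _ => ?_, ℓ₀, fun ℓ _ hℓ => ?_⟩
  · unfold twoPointWeight
    split_ifs <;> linarith
  · by_contra! h
    simp [twoPointWeight, h.1, h.2] at hℓ

lemma exists_isSOSII_gridMean_eq {N : ℕ} (hN : 1 ≤ N) {c : ℝ} (hc : |c| ≤ 1) :
    ∃ η, IsSOSII N η ∧ ∑ ℓ ∈ grid N, η ℓ = 1 ∧ gridMean N η = c := by
  obtain ⟨hc₁, hc₂⟩ := abs_le.mp hc
  have hN₀ : (N : ℝ) ≠ 0 := by positivity
  -- `min` keeps `ℓ₀ + 1` on the grid when `c = 1`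
  set ℓ₀ : ℤ := min ⌊(N : ℝ) * c⌋ (N - 1) with hℓ₀
  have hfloor : -(N : ℤ) ≤ ⌊(N : ℝ) * c⌋ := Int.le_floor.mpr (by push_cast; nlinarith)
  have hlow : (ℓ₀ : ℝ) ≤ N * c :=
    (Int.cast_le.mpr (min_le_left _ _)).trans (Int.floor_le _)
  have hhigh : (N : ℝ) * c ≤ ℓ₀ + 1 := by
    rcases min_cases ⌊(N : ℝ) * c⌋ (N - 1) with ⟨h, _⟩ | ⟨h, _⟩ <;> rw [hℓ₀, h]
    · exact (Int.lt_floor_add_one _).le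
    · push_cast; nlinarith
  have hmem₀ : ℓ₀ ∈ grid N := mem_Icc.mpr ⟨le_min hfloor (by omega), by omega⟩
  have hmem₁ : ℓ₀ + 1 ∈ grid N := mem_Icc.mpr ⟨by omega, by omega⟩
  refine ⟨twoPointWeight ℓ₀ (N * c - ℓ₀), isSOSII_twoPointWeight N ℓ₀ (by linarith)
    (by linarith), ?_, ?_⟩
  · simpa using sum_mul_twoPointWeight hmem₀ hmem₁ (N * c - ℓ₀) 1
  · rw [gridMean, sum_mul_twoPointWeight hmem₀ hmem₁]
    field_simp
    push_cast
    ring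

section QuadraticForm

variable {m ι R : Type*} [Fintype m] [Fintype ι] [CommRing R]

lemma dotProduct_sum_smul_vecMulVec_mulVec (lam : ι → R) (v : ι → m → R) (w : m → R) :
    w ⬝ᵥ (∑ j, lam j • vecMulVec (v j) (v j)) *ᵥ w = ∑ j, lam j * (v j ⬝ᵥ w) ^ 2 := by
  simp only [sum_mulVec, dotProduct_sum, smul_mulVec, vecMulVec_mulVec, dotProduct_smul]
  refine sum_congr rfl fun j _ => ?_
  simp [dotProduct_comm w (v j), sq]

lemma dotProduct_transpose_mul_self_mulVec {p : Type*} [Fintype p] (X : Matrix p m R)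
    (w : m → R) : w ⬝ᵥ (Xᵀ * X) *ᵥ w = X *ᵥ w ⬝ᵥ X *ᵥ w := by
  rw [← mulVec_mulVec, dotProduct_mulVec, vecMul_transpose]

end QuadraticForm

lemma sum_sq_mulVec_eq_of_eq_sum_smul_vecMulVec {n d : ℕ} (hn : n ≠ 0)
    {X : Matrix (Fin n) (Fin d) ℝ} {v : Fin d → Fin d → ℝ} {lam : Fin d → ℝ}
    (hdecomp : (1 / (n : ℝ)) • (Xᵀ * X) = ∑ j, lam j • vecMulVec (v j) (v j)) (w : Fin d → ℝ) :
    ∑ i, (X *ᵥ w) i ^ 2 = n * ∑ j, lam j * (v j ⬝ᵥ w) ^ 2 := by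
  have h := congrArg (fun M => w ⬝ᵥ M *ᵥ w) hdecomp
  simp only [smul_mulVec, dotProduct_smul, dotProduct_transpose_mul_self_mulVec,
    dotProduct_sum_smul_vecMulVec_mulVec, smul_eq_mul] at h
  rw [← h, dotProduct]
  field_simp

section Scaling

variable {ι : Type*} [Fintype ι] {c : ℝ}

lemma sqrt_sum_sq_smul (hc : 0 ≤ c) (f : ι → ℝ) :
    Real.sqrt (∑ i, (c • f) i ^ 2) = c * Real.sqrt (∑ i, f i ^ 2) := by
  simp only [Pi.smul_apply, smul_eq_mul, mul_pow, ← mul_sum]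
  rw [Real.sqrt_mul (sq_nonneg c), Real.sqrt_sq hc]

lemma sum_abs_smul (hc : 0 ≤ c) (f : ι → ℝ) : ∑ i, |(c • f) i| = c * ∑ i, |f i| := by
  simp only [Pi.smul_apply, smul_eq_mul, abs_mul, abs_of_nonneg hc, mul_sum]

end Scaling

lemma sq_le_sq_max_sub_add {t u A C : ℝ} (ht : 0 ≤ t) (hu : 0 ≤ u) (hA : 0 ≤ A) (hC : 0 ≤ C)
    (h : (t + u) ^ 2 ≤ A ^ 2 + C) : t ^ 2 ≤ max (A - u) 0 ^ 2 + C := by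
  rcases le_total u A with huA | hAu
  · rw [max_eq_left (sub_nonneg.mpr huA)]
    rcases le_total (A - u) t with hle | hle
    · nlinarith [mul_nonneg hu (sub_nonneg.mpr hle)]
    · nlinarith [mul_le_mul hle hle ht (sub_nonneg.mpr huA)]
  · rw [max_eq_right (sub_nonpos.mpr hAu)]
    nlinarith

section Relaxation

def sparsePCAValues {n d : ℕ} (k : ℕ) (ρ : ℝ) (X : Matrix (Fin n) (Fin d) ℝ) : Set ℝ :=
  {r : ℝ | ∃ w : Fin d → ℝ,
    Real.sqrt (∑ i, w i ^ 2) = 1 ∧ {i | w i ≠ 0}.ncard ≤ k ∧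
    ρ * ∑ j, |w j| ≤ Real.sqrt (∑ i, (X *ᵥ w) i ^ 2) ∧
    r = (1 / n) * (Real.sqrt (∑ i, (X *ᵥ w) i ^ 2) - ρ * ∑ j, |w j|) ^ 2}

noncomputable def sosIIRelaxationValues (n k N : ℕ) (ρ : ℝ) {d : ℕ} (v : Fin d → Fin d → ℝ)
    (lam : Fin d → ℝ) : Set ℝ :=
  {r : ℝ | ∃ (w : Fin d → ℝ) (t y : ℝ) (η : Fin d → ℤ → ℝ),
    Real.sqrt (∑ i, w i ^ 2) ≤ 1 ∧ {i | w i ≠ 0}.ncard ≤ k ∧ 0 ≤ t ∧ ∑ j, |w j| ≤ y ∧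
    (∀ j, IsSOSII N (η j)) ∧ (∀ j, ∑ ℓ ∈ grid N, η j ℓ = 1) ∧
    (∀ j, v j ⬝ᵥ w = gridMean N (η j)) ∧
    (t + ρ * y) ^ 2 ≤ n * ∑ j, lam j * gridSecondMoment N (η j) ∧
    r = t ^ 2 / n}

variable {n d k N : ℕ} {ρ : ℝ} {X : Matrix (Fin n) (Fin d) ℝ} {v : Fin d → Fin d → ℝ}
  {lam : Fin d → ℝ}

lemma sparsePCAValues_subset_sosIIRelaxationValues (hn : n ≠ 0) (hN : 1 ≤ N)
    (hv : ∀ j, ∑ i, v j i ^ 2 = 1) (hlam : ∀ j, 0 ≤ lam j)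
    (hdecomp : (1 / (n : ℝ)) • (Xᵀ * X) = ∑ j, lam j • vecMulVec (v j) (v j)) :
    sparsePCAValues k ρ X ⊆ sosIIRelaxationValues n k N ρ v lam := by
  rintro r ⟨w, hw, hk, hfeas, rfl⟩
  have hcoord : ∀ j, |v j ⬝ᵥ w| ≤ 1 := fun j => by
    rw [← sq_le_one_iff_abs_le_one]
    calc (v j ⬝ᵥ w) ^ 2 ≤ (∑ i, v j i ^ 2) * ∑ i, w i ^ 2 := sum_mul_sq_le_sq_mul_sq _ _ _
      _ = 1 := by rw [hv, Real.sqrt_eq_one.mp hw, one_mul]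
  choose η hsos hsum hmean using fun j => exists_isSOSII_gridMean_eq hN (hcoord j)
  refine ⟨w, _, _, η, hw.le, hk, sub_nonneg.mpr hfeas, le_rfl, hsos, hsum,
    fun j => (hmean j).symm, ?_, by ring⟩
  rw [sub_add_cancel, Real.sq_sqrt (by positivity),
    sum_sq_mulVec_eq_of_eq_sum_smul_vecMulVec hn hdecomp w]
  gcongr with j
  · exact hlam j
  · exact hmean j ▸ (hsos j).sq_gridMean_le (hsum j)

lemma bddAbove_sosIIRelaxationValues (hρ : 0 ≤ ρ) (hlam : ∀ j, 0 ≤ lam j) :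
    BddAbove (sosIIRelaxationValues n k N ρ v lam) := by
  refine ⟨∑ j, lam j, ?_⟩
  rintro r ⟨w, t, y, η, -, -, ht, hy, hsos, hsum, -, hquad, rfl⟩
  have hy₀ : 0 ≤ y := (sum_nonneg fun j _ => abs_nonneg (w j)).trans hy
  refine div_le_of_le_mul₀ n.cast_nonneg (sum_nonneg fun j _ => hlam j) ?_
  calc t ^ 2 ≤ (t + ρ * y) ^ 2 := by gcongr; exact le_add_of_nonneg_right (by positivity)
    _ ≤ n * ∑ j, lam j * gridSecondMoment N (η j) := hquad
    _ ≤ n * ∑ j, lam j := by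
      gcongr with j
      exact mul_le_of_le_one_right (hlam j) ((hsos j).gridSecondMoment_le_one (hsum j))
    _ = (∑ j, lam j) * n := mul_comm _ _

lemma mul_sq_mem_sparsePCAValues {w : Fin d → ℝ} {c : ℝ} (hc : 0 < c)
    (hnorm : c * Real.sqrt (∑ i, w i ^ 2) = 1) (hk : {i | w i ≠ 0}.ncard ≤ k)
    (hfeas : ρ * ∑ j, |w j| ≤ Real.sqrt (∑ i, (X *ᵥ w) i ^ 2)) :
    (1 / n) * (c * (Real.sqrt (∑ i, (X *ᵥ w) i ^ 2) - ρ * ∑ j, |w j|)) ^ 2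
      ∈ sparsePCAValues k ρ X := by
  have hXw : Real.sqrt (∑ i, (X *ᵥ (c • w)) i ^ 2) = c * Real.sqrt (∑ i, (X *ᵥ w) i ^ 2) := by
    rw [mulVec_smul, sqrt_sum_sq_smul hc.le]
  refine ⟨c • w, by rwa [sqrt_sum_sq_smul hc.le], ?_, ?_, ?_⟩
  · simpa [hc.ne'] using hk
  · rw [hXw, sum_abs_smul hc.le, mul_left_comm]
    exact mul_le_mul_of_nonneg_left hfeas hc.le
  · rw [hXw, sum_abs_smul hc.le]
    ring

lemma sq_max_sub_div_le_sSup_sparsePCAValues (hne : (sparsePCAValues k ρ X).Nonempty)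
    (hbdd : BddAbove (sparsePCAValues k ρ X)) {w : Fin d → ℝ}
    (hw : Real.sqrt (∑ i, w i ^ 2) ≤ 1) (hk : {i | w i ≠ 0}.ncard ≤ k) :
    max (Real.sqrt (∑ i, (X *ᵥ w) i ^ 2) - ρ * ∑ j, |w j|) 0 ^ 2 / n
      ≤ sSup (sparsePCAValues k ρ X) := by
  set A := Real.sqrt (∑ i, (X *ᵥ w) i ^ 2)
  set u := ρ * ∑ j, |w j|
  rcases le_or_gt (A - u) 0 with hAu | hAu
  · obtain ⟨r, hr⟩ := hne
    have hr₀ : 0 ≤ r := by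
      obtain ⟨-, -, -, -, rfl⟩ := hr
      positivity
    rw [max_eq_right hAu, sq, zero_mul, zero_div]
    exact hr₀.trans (le_csSup hbdd hr)
  have hw₀ : w ≠ 0 := by
    rintro rfl
    simp [A, u] at hAu
  have hs : 0 < Real.sqrt (∑ i, w i ^ 2) := by
    obtain ⟨i, hi⟩ := Function.ne_iff.mp hw₀
    exact Real.sqrt_pos.mpr
      (sum_pos' (fun i _ => sq_nonneg (w i)) ⟨i, mem_univ i, pow_two_pos_of_ne_zero hi⟩)
  have hmem := mul_sq_mem_sparsePCAValues (inv_pos.mpr hs) (inv_mul_cancel₀ hs.ne') hk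
    (sub_pos.mp hAu).le
  refine (le_csSup hbdd hmem).trans' ?_
  rw [max_eq_left hAu.le, mul_pow, div_eq_inv_mul, one_div]
  gcongr
  exact le_mul_of_one_le_left (sq_nonneg _) (one_le_pow₀ (one_le_inv₀ hs |>.mpr hw))

lemma le_sSup_sparsePCAValues_add_of_mem_sosIIRelaxationValues (hn : n ≠ 0) (hρ : 0 ≤ ρ)
    (hlam : ∀ j, 0 ≤ lam j)
    (hdecomp : (1 / (n : ℝ)) • (Xᵀ * X) = ∑ j, lam j • vecMulVec (v j) (v j))
    (hne : (sparsePCAValues k ρ X).Nonempty) (hbdd : BddAbove (sparsePCAValues k ρ X)) {r : ℝ}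
    (hr : r ∈ sosIIRelaxationValues n k N ρ v lam) :
    r ≤ sSup (sparsePCAValues k ρ X) + 1 / (4 * N ^ 2) * ∑ j, lam j := by
  obtain ⟨w, t, y, η, hw, hk, ht, hy, hsos, hsum, hmean, hquad, rfl⟩ := hr
  set A := Real.sqrt (∑ i, (X *ᵥ w) i ^ 2)
  set u := ρ * ∑ j, |w j|
  set C := n * (1 / (4 * N ^ 2) * ∑ j, lam j)
  have hC : 0 ≤ C := by
    have := sum_nonneg fun j (_ : j ∈ univ) => hlam j
    positivity
  have hquad' : (t + u) ^ 2 ≤ A ^ 2 + C := calc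
    (t + u) ^ 2 ≤ (t + ρ * y) ^ 2 := by gcongr; exact mul_le_mul_of_nonneg_left hy hρ
    _ ≤ n * ∑ j, lam j * gridSecondMoment N (η j) := hquad
    _ ≤ n * ∑ j, lam j * ((v j ⬝ᵥ w) ^ 2 + 1 / (4 * N ^ 2)) := by
      gcongr with j
      · exact hlam j
      · exact hmean j ▸ (hsos j).gridSecondMoment_le (hsum j)
    _ = A ^ 2 + C := by
      rw [Real.sq_sqrt (by positivity), sum_sq_mulVec_eq_of_eq_sum_smul_vecMulVec hn hdecomp w]
      simp only [mul_add, sum_add_distrib, ← sum_mul, C]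
      ring
  have ht2 := sq_le_sq_max_sub_add ht (by positivity) (Real.sqrt_nonneg _) hC hquad'
  calc t ^ 2 / n ≤ (max (A - u) 0 ^ 2 + C) / n := by gcongr
    _ = max (A - u) 0 ^ 2 / n + 1 / (4 * N ^ 2) * ∑ j, lam j := by
      rw [add_div, mul_div_cancel_left₀ _ (Nat.cast_ne_zero.mpr hn)]
    _ ≤ _ := by
      gcongr
      exact sq_max_sub_div_le_sSup_sparsePCAValues hne hbdd hw hk

end Relaxation

theorem stmt8_general (n d k N : ℕ) (hn : 1 ≤ n) (hN : 1 ≤ N)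
    (ρ : ℝ) (hρ : 0 < ρ)
    (X : Matrix (Fin n) (Fin d) ℝ) (v : Fin d → Fin d → ℝ) (lam : Fin d → ℝ)
    (horth : ∀ j j' : Fin d, (∑ i, v j i * v j' i) = if j = j' then 1 else 0)
    (hnonneg : ∀ j, 0 ≤ lam j)
    (hdecomp : (1 / (n : ℝ)) • (Xᵀ * X) = ∑ j, lam j • Matrix.vecMulVec (v j) (v j))
    (hfeas : ∃ w : Fin d → ℝ, Real.sqrt (∑ i, w i ^ 2) = 1 ∧ {i | w i ≠ 0}.ncard ≤ k ∧
        ρ * ∑ j, |w j| ≤ Real.sqrt (∑ i, (X.mulVec w i) ^ 2))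
    (opt ub : ℝ)
    (hopt : opt = sSup {r : ℝ | ∃ w : Fin d → ℝ,
        Real.sqrt (∑ i, w i ^ 2) = 1 ∧ {i | w i ≠ 0}.ncard ≤ k ∧
        ρ * ∑ j, |w j| ≤ Real.sqrt (∑ i, (X.mulVec w i) ^ 2) ∧
        r = (1 / n) * (Real.sqrt (∑ i, (X.mulVec w i) ^ 2) - ρ * ∑ j, |w j|) ^ 2})
    (hub : ub = sSup {r : ℝ | ∃ (w : Fin d → ℝ) (t y : ℝ) (η : Fin d → ℤ → ℝ),
        Real.sqrt (∑ i, w i ^ 2) ≤ 1 ∧ {i | w i ≠ 0}.ncard ≤ k ∧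
        0 ≤ t ∧ (∑ j, |w j|) ≤ y ∧
        (∀ j, IsSOSII N (η j)) ∧
        (∀ j, ∑ ℓ ∈ Finset.Icc (-(N : ℤ)) (N : ℤ), η j ℓ = 1) ∧
        (∀ j, (∑ i, v j i * w i) =
          ∑ ℓ ∈ Finset.Icc (-(N : ℤ)) (N : ℤ), ((ℓ : ℝ) / N) * η j ℓ) ∧
        (t + ρ * y) ^ 2 ≤
          n * ∑ j, lam j * ∑ ℓ ∈ Finset.Icc (-(N : ℤ)) (N : ℤ), ((ℓ : ℝ) / N) ^ 2 * η j ℓ ∧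
        r = t ^ 2 / n}) :
    opt ≤ ub ∧ ub ≤ opt + (1 / (4 * N ^ 2)) * ∑ j, lam j := by
  subst hopt hub
  have hn₀ : n ≠ 0 := by omega
  have hv : ∀ j, ∑ i, v j i ^ 2 = 1 := fun j => by simpa [sq] using horth j j
  have hsub : sparsePCAValues k ρ X ⊆ sosIIRelaxationValues n k N ρ v lam :=
    sparsePCAValues_subset_sosIIRelaxationValues hn₀ hN hv hnonneg hdecomp
  have hbdd : BddAbove (sosIIRelaxationValues n k N ρ v lam) :=
    bddAbove_sosIIRelaxationValues hρ.le hnonneg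
  obtain ⟨w, hw, hk, hfeas⟩ := hfeas
  have hne : (sparsePCAValues k ρ X).Nonempty := ⟨_, w, hw, hk, hfeas, rfl⟩
  exact ⟨csSup_le_csSup hbdd hne hsub, csSup_le (hne.mono hsub) fun r hr =>
    le_sSup_sparsePCAValues_add_of_mem_sosIIRelaxationValues hn₀ hρ.le hnonneg hdecomp hne
      (hbdd.mono hsub) hr⟩

theorem stmt8 (n d k N : ℕ) (hn : 1 ≤ n) (hd : 1 ≤ d) (hk : 1 ≤ k) (hN : 1 ≤ N)
    (ρ : ℝ) (hρ : 0 < ρ)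
    (X : Matrix (Fin n) (Fin d) ℝ) (v : Fin d → Fin d → ℝ) (lam : Fin d → ℝ)
    (horth : ∀ j j' : Fin d, (∑ i, v j i * v j' i) = if j = j' then 1 else 0)
    (hmono : ∀ j j' : Fin d, j ≤ j' → lam j' ≤ lam j)
    (hnonneg : ∀ j, 0 ≤ lam j)
    (hdecomp : (1 / (n : ℝ)) • (Xᵀ * X) = ∑ j, lam j • Matrix.vecMulVec (v j) (v j))
    (hfeas : ∃ w : Fin d → ℝ, Real.sqrt (∑ i, w i ^ 2) = 1 ∧ {i | w i ≠ 0}.ncard ≤ k ∧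
        ρ * ∑ j, |w j| ≤ Real.sqrt (∑ i, (X.mulVec w i) ^ 2))
    (opt ub : ℝ)
    (hopt : opt = sSup {r : ℝ | ∃ w : Fin d → ℝ,
        Real.sqrt (∑ i, w i ^ 2) = 1 ∧ {i | w i ≠ 0}.ncard ≤ k ∧
        ρ * ∑ j, |w j| ≤ Real.sqrt (∑ i, (X.mulVec w i) ^ 2) ∧
        r = (1 / n) * (Real.sqrt (∑ i, (X.mulVec w i) ^ 2) - ρ * ∑ j, |w j|) ^ 2})
    (hub : ub = sSup {r : ℝ | ∃ (w : Fin d → ℝ) (t y : ℝ) (η : Fin d → ℤ → ℝ),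
        Real.sqrt (∑ i, w i ^ 2) ≤ 1 ∧ {i | w i ≠ 0}.ncard ≤ k ∧
        0 ≤ t ∧ (∑ j, |w j|) ≤ y ∧
        (∀ j, IsSOSII N (η j)) ∧
        (∀ j, ∑ ℓ ∈ Finset.Icc (-(N : ℤ)) (N : ℤ), η j ℓ = 1) ∧
        (∀ j, (∑ i, v j i * w i) =
          ∑ ℓ ∈ Finset.Icc (-(N : ℤ)) (N : ℤ), ((ℓ : ℝ) / N) * η j ℓ) ∧
        (t + ρ * y) ^ 2 ≤
          n * ∑ j, lam j * ∑ ℓ ∈ Finset.Icc (-(N : ℤ)) (N : ℤ), ((ℓ : ℝ) / N) ^ 2 * η j ℓ ∧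
        r = t ^ 2 / n}) :
    opt ≤ ub ∧ ub ≤ opt + (1 / (4 * N ^ 2)) * ∑ j, lam j :=
  stmt8_general n d k N hn hN ρ hρ X v lam horth hnonneg hdecomp hfeas opt ub hopt hub
end
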